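/- Let n ≥ 2, i ∈ [n-1] and J ⊆ [n-1]. Then: (1) the standard inner product ⟨−α∨_i, v_J⟩ ≥ −2, with equality if and only if i ∈ J; and (2) ⟨e_i, v_J⟩ ≥ 0, with equality if and only if i ∉ J. -/

import Mathlib

/-!
Put `x = i - a` and `y = b - i`, where `[a, b]` is the maximal run of `J` through `i ∈ J`.
The `i`-th coordinate of `v_J` is `(x + 1) (y + 1)` and its two neighbours carry `x (y + 2)`
and `(x + 2) y`: a neighbour either lies in the same run, or lies outside `J` (or outside
`[n-1]`), and then `x = 0` (resp. `y = 0`). Hence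
`⟨-α∨_i, v_J⟩ = x (y + 2) + (x + 2) y - 2 (x + 1) (y + 1) = -2`. For `i ∉ J` the `i`-th
coordinate vanishes while all coordinates are nonnegative, so `⟨-α∨_i, v_J⟩ ≥ 0`.
-/

open Matrix

attribute [local instance] Classical.propDecidable

noncomputable section

namespace PetersonPaper

/-- The natural number `c` (0-based; encoding the 1-based element `c+1`) belongs to
`J ⊆ [n-1]`. -/
def memJ (n : ℕ) (J : Set (Fin (n-1))) (c : ℕ) : Prop :=
  ∃ h : c < n - 1, (⟨c, h⟩ : Fin (n-1)) ∈ J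

/-- The (0-based) first element of the maximal interval of consecutive integers of
`J` containing `i ∈ J`. -/
def compStart (n : ℕ) (J : Set (Fin (n-1))) (i : Fin (n-1)) : ℕ :=
  sInf {a : ℕ | a ≤ i.1 ∧ ∀ c : ℕ, a ≤ c → c ≤ i.1 → memJ n J c}

/-- The (0-based) last element of the maximal interval of consecutive integers of
`J` containing `i ∈ J`. -/
def compEnd (n : ℕ) (J : Set (Fin (n-1))) (i : Fin (n-1)) : ℕ :=
  sSup {b : ℕ | b < n - 1 ∧ i.1 ≤ b ∧ ∀ c : ℕ, i.1 ≤ c → c ≤ b → memJ n J c}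

/-- The vertex `v_J ∈ ℝ^{n-1}`: its `i`-th coordinate is `(i+1-a)(b+1-i)` (1-based)
if `i ∈ J` with `[a,b]` the maximal interval of `J` containing `i`, and `0`
otherwise. -/
def vJ (n : ℕ) (J : Set (Fin (n-1))) : Fin (n-1) → ℝ :=
  fun i => if i ∈ J then
    (((i.1 + 1 - compStart n J i) * (compEnd n J i + 1 - i.1) : ℕ) : ℝ) else 0

/-- The standard inner product on `ℝ^{n-1}`. -/
def dotR (n : ℕ) (a b : Fin (n-1) → ℝ) : ℝ := ∑ i, a i * b i

/-- The standard basis vector `e_i` of `ℝ^{n-1}`. -/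
def stdE (n : ℕ) (i : Fin (n-1)) : Fin (n-1) → ℝ := fun j => if j = i then 1 else 0

/-- `-α^∨_i = e_{i-1} - 2 e_i + e_{i+1}` with the convention `e_0 = e_n = 0`
(1-based; `i : Fin (n-1)` encodes `i.1+1`). -/
def negAlphaV (n : ℕ) (i : Fin (n-1)) : Fin (n-1) → ℝ :=
  fun j => (if j.1 + 1 = i.1 then 1 else 0) - 2 * (if j = i then 1 else 0)
    + (if j.1 = i.1 + 1 then 1 else 0)

/-- The face `F_i^+ = conv{v_J : i ∈ J}`. -/
def Fplus (n : ℕ) (i : Fin (n-1)) : Set (Fin (n-1) → ℝ) :=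
  convexHull ℝ { v | ∃ J : Set (Fin (n-1)), i ∈ J ∧ v = vJ n J }

/-- The face `F_i^- = conv{v_J : i ∉ J}`. -/
def Fminus (n : ℕ) (i : Fin (n-1)) : Set (Fin (n-1) → ℝ) :=
  convexHull ℝ { v | ∃ J : Set (Fin (n-1)), i ∉ J ∧ v = vJ n J }

/-- The polytope `P_{n-1} = conv{v_J : J ⊆ [n-1]}`. -/
def Ppoly (n : ℕ) : Set (Fin (n-1) → ℝ) :=
  convexHull ℝ { v | ∃ J : Set (Fin (n-1)), v = vJ n J }

/-- The face `F_{K,J} = (⋂_{i ∈ K} F_i^+) ∩ (⋂_{i ∉ J} F_i^-)` of `P_{n-1}`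
(intersecting with `P_{n-1}` itself, which encodes the convention
`F_{∅,[n-1]} = P_{n-1}` and is harmless otherwise, all faces being subsets of
`P_{n-1}`). -/
def FKJ (n : ℕ) (K J : Set (Fin (n-1))) : Set (Fin (n-1) → ℝ) :=
  Ppoly n ∩ (⋂ i ∈ K, Fplus n i) ∩ (⋂ i ∈ (Jᶜ : Set (Fin (n-1))), Fminus n i)

/- `compStart`, `compEnd` and `vJ`, with `memJ n J` replaced by an arbitrary predicate on `ℕ`. -/
def runStart (p : ℕ → Prop) (i : ℕ) : ℕ :=
  sInf {a : ℕ | a ≤ i ∧ ∀ c : ℕ, a ≤ c → c ≤ i → p c}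

def runEnd (N : ℕ) (p : ℕ → Prop) (i : ℕ) : ℕ :=
  sSup {b : ℕ | b < N ∧ i ≤ b ∧ ∀ c : ℕ, i ≤ c → c ≤ b → p c}

def runProfile (N : ℕ) (p : ℕ → Prop) (c : ℕ) : ℝ :=
  if p c then (((c + 1 - runStart p c) * (runEnd N p c + 1 - c) : ℕ) : ℝ) else 0

section Runs

variable {N : ℕ} {p : ℕ → Prop} {i : ℕ}

lemma runStart_spec (hi : p i) :
    runStart p i ≤ i ∧ ∀ c, runStart p i ≤ c → c ≤ i → p c :=
  Nat.sInf_mem (s := {a : ℕ | a ≤ i ∧ ∀ c : ℕ, a ≤ c → c ≤ i → p c})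
    ⟨i, le_rfl, fun _ h₁ h₂ => le_antisymm h₂ h₁ ▸ hi⟩

lemma runEnd_spec (hi : p i) (hiN : i < N) :
    runEnd N p i < N ∧ i ≤ runEnd N p i ∧ ∀ c, i ≤ c → c ≤ runEnd N p i → p c :=
  Nat.sSup_mem (s := {b : ℕ | b < N ∧ i ≤ b ∧ ∀ c : ℕ, i ≤ c → c ≤ b → p c})
    ⟨i, hiN, le_rfl, fun _ h₁ h₂ => le_antisymm h₂ h₁ ▸ hi⟩
    ⟨N, fun _ hb => hb.1.le⟩

lemma runStart_succ (hi : p i) (hi' : p (i + 1)) : runStart p (i + 1) = runStart p i := by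
  obtain ⟨ha, hrun⟩ := runStart_spec hi
  obtain ⟨ha', hrun'⟩ := runStart_spec hi'
  apply le_antisymm
  · refine Nat.sInf_le ⟨by omega, fun c h₁ h₂ => ?_⟩
    rcases Nat.lt_or_ge i c with h | h
    · exact (by omega : c = i + 1) ▸ hi'
    · exact hrun c h₁ h
  · rcases Nat.lt_or_ge i (runStart p (i + 1)) with h | h
    · omega
    · exact Nat.sInf_le ⟨h, fun c h₁ h₂ => hrun' c h₁ (by omega)⟩

lemma runEnd_succ (hi : p i) (hi' : p (i + 1)) (hiN : i + 1 < N) :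
    runEnd N p (i + 1) = runEnd N p i := by
  have hbdd : ∀ j, BddAbove {b | b < N ∧ j ≤ b ∧ ∀ c, j ≤ c → c ≤ b → p c} :=
    fun _ => ⟨N, fun _ hb => hb.1.le⟩
  obtain ⟨hb, hib, hrun⟩ := runEnd_spec hi (Nat.lt_of_succ_lt hiN)
  obtain ⟨hb', hib', hrun'⟩ := runEnd_spec hi' hiN
  apply le_antisymm
  · refine le_csSup (hbdd i) ⟨hb', by omega, fun c h₁ h₂ => ?_⟩
    rcases Nat.lt_or_ge i c with h | h
    · exact hrun' c h h₂
    · exact (by omega : c = i) ▸ hi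
  · rcases Nat.lt_or_ge i (runEnd N p i) with h | h
    · exact le_csSup (hbdd (i + 1)) ⟨hb, h, fun c h₁ h₂ => hrun c (by omega) h₂⟩
    · omega

lemma runProfile_of_not (hi : ¬ p i) : runProfile N p i = 0 := if_neg hi

lemma runProfile_nonneg (c : ℕ) : 0 ≤ runProfile N p c := by
  unfold runProfile
  split_ifs
  · positivity
  · rfl

variable (hpN : ∀ c, p c → c < N)
include hpN

lemma runProfile_of_mem (hi : p i) :
    runProfile N p i = ((i : ℝ) - runStart p i + 1) * ((runEnd N p i : ℝ) - i + 1) := by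
  have ha := (runStart_spec hi).1
  have hb := (runEnd_spec hi (hpN i hi)).2.1
  rw [runProfile, if_pos hi]
  push_cast [Nat.cast_sub (by omega : runStart p i ≤ i + 1),
    Nat.cast_sub (by omega : i ≤ runEnd N p i + 1)]
  ring

lemma runProfile_pos (hi : p i) : 0 < runProfile N p i := by
  have ha : (runStart p i : ℝ) ≤ i := by exact_mod_cast (runStart_spec hi).1
  have hb : (i : ℝ) ≤ runEnd N p i := by exact_mod_cast (runEnd_spec hi (hpN i hi)).2.1
  rw [runProfile_of_mem hpN hi]
  nlinarith

lemma runProfile_succ (hi : p i) :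
    runProfile N p (i + 1) = ((runEnd N p i : ℝ) - i) * ((i : ℝ) - runStart p i + 2) := by
  by_cases hi' : p (i + 1)
  · rw [runProfile_of_mem hpN hi', runStart_succ hi hi', runEnd_succ hi hi' (hpN _ hi')]
    push_cast
    ring
  · obtain ⟨-, hib, hrun⟩ := runEnd_spec hi (hpN i hi)
    have hb : runEnd N p i = i :=
      le_antisymm (not_lt.1 fun h => hi' (hrun _ (by omega) h)) hib
    rw [runProfile_of_not hi', hb]
    ring

lemma runProfile_pred (hi : p (i + 1)) :
    runProfile N p i =
      ((i : ℝ) + 1 - runStart p (i + 1)) * ((runEnd N p (i + 1) : ℝ) - i + 1) := by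
  by_cases hi' : p i
  · rw [runProfile_of_mem hpN hi', runStart_succ hi' hi, runEnd_succ hi' hi (hpN _ hi)]
    ring
  · obtain ⟨ha, hrun⟩ := runStart_spec hi
    have ha' : runStart p (i + 1) = i + 1 :=
      le_antisymm ha (not_lt.1 fun h => hi' (hrun _ (by omega) le_self_add))
    rw [runProfile_of_not hi', ha']
    push_cast
    ring

lemma runProfile_second_diff (hi : p i) :
    (if i = 0 then 0 else runProfile N p (i - 1)) + runProfile N p (i + 1)
      - 2 * runProfile N p i = -2 := by
  rw [runProfile_succ hpN hi, runProfile_of_mem hpN hi]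
  rcases i with _ | i
  · have ha : runStart p 0 = 0 := Nat.le_zero.1 (runStart_spec hi).1
    simp only [if_pos, ha]
    push_cast
    ring
  · rw [if_neg (Nat.succ_ne_zero i), Nat.add_sub_cancel, runProfile_pred hpN hi]
    push_cast
    ring

end Runs

section Vectors

variable {n : ℕ}

lemma memJ_val_iff {J : Set (Fin (n-1))} {j : Fin (n-1)} : memJ n J j.1 ↔ j ∈ J :=
  ⟨fun ⟨_, h⟩ => h, fun h => ⟨j.2, h⟩⟩

lemma vJ_eq_runProfile (J : Set (Fin (n-1))) :
    vJ n J = fun j => runProfile (n - 1) (memJ n J) j.1 := by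
  funext j
  by_cases hj : j ∈ J
  · rw [vJ, runProfile, if_pos hj, if_pos (memJ_val_iff.2 hj)]
    rfl
  · rw [vJ, runProfile, if_neg hj, if_neg (mt memJ_val_iff.1 hj)]

lemma dotR_stdE (i : Fin (n-1)) (v : Fin (n-1) → ℝ) : dotR n (stdE n i) v = v i := by
  simp [dotR, stdE]

lemma dotR_negAlphaV (i : Fin (n-1)) (w : ℕ → ℝ) (hw : ∀ c, n - 1 ≤ c → w c = 0) :
    dotR n (negAlphaV n i) (fun j => w j) =
      (if i.1 = 0 then 0 else w (i.1 - 1)) + w (i.1 + 1) - 2 * w i := by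
  have hi := i.2
  simp only [dotR, negAlphaV, Fin.ext_iff]
  rw [Fin.sum_univ_eq_sum_range (fun c => ((if c + 1 = i.1 then 1 else 0)
    - 2 * (if c = i.1 then 1 else 0) + (if c = i.1 + 1 then 1 else 0)) * w c)]
  simp only [add_mul, sub_mul, ite_mul, one_mul, zero_mul, mul_assoc, Finset.sum_add_distrib,
    Finset.sum_sub_distrib, ← Finset.mul_sum, Finset.sum_ite_eq', Finset.mem_range]
  have hleft : (∑ c ∈ Finset.range (n - 1), if c + 1 = i.1 then w c else 0) =
      if i.1 = 0 then 0 else w (i.1 - 1) := by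
    rcases hi0 : i.1 with _ | k
    · simp
    · simp only [Nat.add_right_cancel_iff, Finset.sum_ite_eq', Finset.mem_range]
      simp [show k < n - 1 by omega]
  have hright : (if i.1 + 1 < n - 1 then w (i.1 + 1) else 0) = w (i.1 + 1) :=
    ite_eq_left_iff.2 fun h => (hw _ (not_lt.1 h)).symm
  rw [hleft, hright, if_pos hi]
  ring

end Vectors

theorem inner_products_with_vJ (n : ℕ) (i : Fin (n-1)) (J : Set (Fin (n-1))) :
    ((-2 : ℝ) ≤ dotR n (negAlphaV n i) (vJ n J) ∧
      (dotR n (negAlphaV n i) (vJ n J) = -2 ↔ i ∈ J)) ∧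
    ((0 : ℝ) ≤ dotR n (stdE n i) (vJ n J) ∧
      (dotR n (stdE n i) (vJ n J) = 0 ↔ i ∉ J)) := by
  have hpN : ∀ c, memJ n J c → c < n - 1 := fun _ h => h.1
  rw [vJ_eq_runProfile, dotR_stdE, dotR_negAlphaV i _ fun c hc =>
    runProfile_of_not fun h => (hpN c h).not_ge hc]
  by_cases hi : i ∈ J
  · have hsecond := runProfile_second_diff hpN (memJ_val_iff.2 hi)
    have hpos := runProfile_pos hpN (memJ_val_iff.2 hi)
    rw [hsecond]
    exact ⟨⟨le_rfl, iff_of_true rfl hi⟩, hpos.le, iff_of_false hpos.ne' (not_not_intro hi)⟩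
  · have hzero := runProfile_of_not (N := n - 1) (mt memJ_val_iff.1 hi)
    have hleft : 0 ≤ if i.1 = 0 then 0 else runProfile (n - 1) (memJ n J) (i.1 - 1) := by
      split_ifs
      exacts [le_rfl, runProfile_nonneg _]
    have hright := runProfile_nonneg (N := n - 1) (p := memJ n J) (i.1 + 1)
    rw [hzero]
    exact ⟨⟨by linarith, iff_of_false (by linarith) hi⟩, le_rfl, iff_of_true rfl hi⟩

end PetersonPaper
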